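/- (Reduction of the third Bianchi–Padova relation in semi-metric geometry.) Let L be a connection on Ω, g a metric on Ω with lowered curvature R, and suppose the non-metricity of (L,g) has the semi-metric form Q_{kij} = Q_k g_{ij} for a smooth covector field Q_k : Ω → ℝ³. Then for all indices i,j,k,l and all points of Ω, (1/2)(∂_i Q_j − ∂_j Q_i) g_{kl} = (1/2)(R_{ijkl} + R_{ijlk}). -/

import Mathlib

noncomputable section

/-- Points of ℝ³. -/
abbrev E3 := Fin 3 → ℝ

/-- Partial derivative of `f` along the `j`-th coordinate at `x`. -/
def pd (f : E3 → ℝ) (j : Fin 3) (x : E3) : ℝ :=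
  fderiv ℝ f x (Pi.single j 1)

/-- A connection coefficient field: `L x i j k = L^i_{jk}(x)`. -/
abbrev Conn := E3 → Fin 3 → Fin 3 → Fin 3 → ℝ

/-- Smoothness of a connection on `Ω`. -/
def ConnSmooth (L : Conn) (Ω : Set E3) : Prop :=
  ∀ i j k, ContDiffOn ℝ (⊤ : ℕ∞) (fun x => L x i j k) Ω

/-- Torsion of a connection: `torsion L x i j k = T_{jk}^i = (1/2)(L^i_{jk} - L^i_{kj})`. -/
def torsion (L : Conn) (x : E3) (i j k : Fin 3) : ℝ :=
  (L x i j k - L x i k j) / 2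

/-- Curvature of a connection: `curv L x p j i q = R_{jiq}^p`. -/
def curv (L : Conn) (x : E3) (p j i q : Fin 3) : ℝ :=
  pd (fun y => L y p i q) j x - pd (fun y => L y p j q) i x
    + ∑ h, (L x h i q * L x p j h - L x h j q * L x p i h)

/-- A metric field. -/
abbrev Metric := E3 → Matrix (Fin 3) (Fin 3) ℝ

/-- `g` is a metric on `Ω`: smooth entries, symmetric and positive definite on `Ω`. -/
def MetricOn (g : Metric) (Ω : Set E3) : Prop :=
  (∀ i j, ContDiffOn ℝ (⊤ : ℕ∞) (fun x => g x i j) Ω) ∧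
  (∀ x ∈ Ω, (g x).IsSymm) ∧ (∀ x ∈ Ω, (g x).PosDef)

/-- Non-metricity of `(L, g)`: `nm L g x k i j = Q_{kij}`. -/
def nm (L : Conn) (g : Metric) (x : E3) (k i j : Fin 3) : ℝ :=
  - pd (fun y => g y i j) k x + ∑ p, (L x p k j * g x i p + L x p k i * g x j p)

/-- Lowered curvature: `lcurv L g x i j k l = R_{ijkl} = g_{lp} R_{ijk}^p`. -/
def lcurv (L : Conn) (g : Metric) (x : E3) (i j k l : Fin 3) : ℝ :=
  ∑ p, g x l p * curv L x p i j k

/-!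
Rewriting the definition of non-metricity as
`∂_k g_{ij} = L^p_{kj} g_{ip} + L^p_{ki} g_{jp} - Q_{kij}` and using `∂_i ∂_j g_{kl} = ∂_j ∂_i g_{kl}`,
every connection satisfies
`R_{ijkl} + R_{ijlk} = ∂_i Q_{jkl} - ∂_j Q_{ikl} + L^p_{jl} Q_{ikp} + L^p_{jk} Q_{ilp} - L^p_{il} Q_{jkp} - L^p_{ik} Q_{jlp}`.
When `Q_{kij} = Q_k g_{ij}`, expanding `∂_i (Q_j g_{kl})` by the product rule and the formula for
`∂_i g_{kl}` makes all the `L Q` and `Q Q` terms cancel, leaving `(∂_i Q_j - ∂_j Q_i) g_{kl}`.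
-/

open Filter Topology

section PartialDerivative

variable {f g : E3 → ℝ} {x : E3}

lemma pd_congr_of_eventuallyEq (h : f =ᶠ[𝓝 x] g) (i : Fin 3) : pd f i x = pd g i x := by
  rw [pd, pd, h.fderiv_eq]

lemma pd_neg (i : Fin 3) : pd (fun y => -f y) i x = -pd f i x := by
  simp [pd]

lemma pd_add (hf : DifferentiableAt ℝ f x) (hg : DifferentiableAt ℝ g x) (i : Fin 3) :
    pd (fun y => f y + g y) i x = pd f i x + pd g i x := by
  simp [pd, fderiv_fun_add hf hg]

lemma pd_mul (hf : DifferentiableAt ℝ f x) (hg : DifferentiableAt ℝ g x) (i : Fin 3) :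
    pd (fun y => f y * g y) i x = pd f i x * g x + f x * pd g i x := by
  simp only [pd, fderiv_fun_mul hf hg, add_apply, smul_apply, smul_eq_mul]
  ring

lemma pd_sum {ι : Type*} {s : Finset ι} {F : ι → E3 → ℝ}
    (hF : ∀ p ∈ s, DifferentiableAt ℝ (F p) x) (i : Fin 3) :
    pd (fun y => ∑ p ∈ s, F p y) i x = ∑ p ∈ s, pd (F p) i x := by
  simp [pd, fderiv_fun_sum hF]

lemma differentiableAt_pd (hf : ContDiffAt ℝ 2 f x) (j : Fin 3) :
    DifferentiableAt ℝ (pd f j) x :=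
  ((hf.fderiv_right (m := 1) (by norm_num)).differentiableAt one_ne_zero).clm_apply
    (differentiableAt_const _)

lemma pd_pd_comm (hf : ContDiffAt ℝ 2 f x) (i j : Fin 3) :
    pd (pd f j) i x = pd (pd f i) j x := by
  have hd : DifferentiableAt ℝ (fderiv ℝ f) x :=
    (hf.fderiv_right (m := 1) (by norm_num)).differentiableAt one_ne_zero
  have hsymm : IsSymmSndFDerivAt ℝ f x :=
    hf.isSymmSndFDerivAt (by simp [minSmoothness_of_isRCLikeNormedField])
  have hpd : ∀ k, pd f k = fun y => fderiv ℝ f y (Pi.single k 1) := fun _ => rfl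
  simp only [hpd, pd, fderiv_clm_apply hd (differentiableAt_const _)]
  simpa using hsymm (Pi.single i 1) (Pi.single j 1)

end PartialDerivative

section Connection

variable {L : Conn} {g : Metric} {x : E3}

lemma pd_nm (hg : ∀ a b, ContDiffAt ℝ 2 (fun y => g y a b) x)
    (hL : ∀ p a b, DifferentiableAt ℝ (fun y => L y p a b) x) (c a b d : Fin 3) :
    pd (fun y => nm L g y a b d) c x
      = -pd (pd (fun y => g y b d) a) c x
        + ∑ p, (pd (fun y => L y p a d) c x * g x b p + L x p a d * pd (fun y => g y b p) c x
          + (pd (fun y => L y p a b) c x * g x d p + L x p a b * pd (fun y => g y d p) c x)) := by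
  have hgx a b : DifferentiableAt ℝ (fun y => g y a b) x :=
    (hg a b).differentiableAt two_ne_zero
  have hterm p : DifferentiableAt ℝ (fun y => L y p a d * g y b p + L y p a b * g y d p) x :=
    ((hL p a d).fun_mul (hgx b p)).add ((hL p a b).fun_mul (hgx d p))
  unfold nm
  rw [pd_add (differentiableAt_pd (hg b d) a).fun_neg (.fun_sum fun p _ => hterm p), pd_neg,
    pd_sum fun p _ => hterm p]
  congr 1
  refine Finset.sum_congr rfl fun p _ => ?_
  rw [pd_add ((hL p a d).fun_mul (hgx b p)) ((hL p a b).fun_mul (hgx d p)),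
    pd_mul (hL p a d) (hgx b p), pd_mul (hL p a b) (hgx d p)]

theorem lcurv_add_lcurv_swap (hg : ∀ a b, ContDiffAt ℝ 2 (fun y => g y a b) x)
    (hsymm : (g x).IsSymm) (hL : ∀ p a b, DifferentiableAt ℝ (fun y => L y p a b) x)
    (i j k l : Fin 3) :
    lcurv L g x i j k l + lcurv L g x i j l k
      = pd (fun y => nm L g y j k l) i x - pd (fun y => nm L g y i k l) j x
        + ∑ p, (L x p j l * nm L g x i k p + L x p j k * nm L g x i l p
          - L x p i l * nm L g x j k p - L x p i k * nm L g x j l p) := by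
  have hg_symm a b : g x b a = g x a b := hsymm.apply a b
  rw [pd_nm hg hL, pd_nm hg hL, pd_pd_comm (hg k l)]
  unfold lcurv curv nm
  simp only [Fin.sum_univ_three, hg_symm 0 1, hg_symm 0 2, hg_symm 1 2]
  ring

theorem lcurv_add_lcurv_swap_of_nm_eventuallyEq {Qv : E3 → Fin 3 → ℝ}
    (hg : ∀ a b, ContDiffAt ℝ 2 (fun y => g y a b) x)
    (hsymm : (g x).IsSymm) (hL : ∀ p a b, DifferentiableAt ℝ (fun y => L y p a b) x)
    (hQ : ∀ a, DifferentiableAt ℝ (fun y => Qv y a) x)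
    (hsemi : ∀ a b c, (fun y => nm L g y a b c) =ᶠ[𝓝 x] fun y => Qv y a * g y b c)
    (i j k l : Fin 3) :
    lcurv L g x i j k l + lcurv L g x i j l k
      = (pd (fun y => Qv y j) i x - pd (fun y => Qv y i) j x) * g x k l := by
  have hnm a b c : nm L g x a b c = Qv x a * g x b c := (hsemi a b c).eq_of_nhds
  have hpd_g a b c :
      pd (fun y => g y b c) a x
        = ∑ p, (L x p a c * g x b p + L x p a b * g x c p) - Qv x a * g x b c := by
    rw [← hnm, nm]
    ring
  have hgkl : DifferentiableAt ℝ (fun y => g y k l) x := (hg k l).differentiableAt two_ne_zero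
  rw [lcurv_add_lcurv_swap hg hsymm hL, pd_congr_of_eventuallyEq (hsemi j k l),
    pd_congr_of_eventuallyEq (hsemi i k l), pd_mul (hQ j) hgkl, pd_mul (hQ i) hgkl,
    hpd_g i k l, hpd_g j k l]
  simp only [hnm, Fin.sum_univ_three]
  ring

end Connection

theorem semi_metric_third_bianchi_general (Ω : Set E3) (hΩ : IsOpen Ω)
    (L : Conn) (hL : ConnSmooth L Ω) (g : Metric) (hg : MetricOn g Ω)
    (Qv : E3 → Fin 3 → ℝ) (hQv : ∀ k, ContDiffOn ℝ (⊤ : ℕ∞) (fun x => Qv x k) Ω)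
    (hsemi : ∀ x ∈ Ω, ∀ k i j : Fin 3, nm L g x k i j = Qv x k * g x i j) :
    ∀ x ∈ Ω, ∀ i j k l : Fin 3,
      (1 / 2) * (pd (fun y => Qv y j) i x - pd (fun y => Qv y i) j x) * g x k l
        = (1 / 2) * (lcurv L g x i j k l + lcurv L g x i j l k) := by
  intro x hx i j k l
  obtain ⟨hg_smooth, hg_symm, -⟩ := hg
  have hΩx : Ω ∈ 𝓝 x := hΩ.mem_nhds hx
  have hsemi_near a b c : (fun y => nm L g y a b c) =ᶠ[𝓝 x] fun y => Qv y a * g y b c :=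
    eventually_of_mem hΩx fun y hy => hsemi y hy a b c
  rw [lcurv_add_lcurv_swap_of_nm_eventuallyEq
    (fun a b => ((hg_smooth a b).contDiffAt hΩx).of_le (WithTop.coe_le_coe.mpr le_top))
    (hg_symm x hx) (fun p a b => ((hL p a b).contDiffAt hΩx).differentiableAt (by simp))
    (fun a => ((hQv a).contDiffAt hΩx).differentiableAt (by simp)) hsemi_near]
  ring

/-- Reduction of the third Bianchi–Padova relation in semi-metric geometry:
if `Q_{kij} = Q_k g_{ij}` then `Q_{[j,i]} g_{kl} = R_{ij(kl)}`. -/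
theorem semi_metric_third_bianchi (Ω : Set E3) (hΩ : IsOpen Ω) (hne : Ω.Nonempty)
    (L : Conn) (hL : ConnSmooth L Ω) (g : Metric) (hg : MetricOn g Ω)
    (Qv : E3 → Fin 3 → ℝ) (hQv : ∀ k, ContDiffOn ℝ (⊤ : ℕ∞) (fun x => Qv x k) Ω)
    (hsemi : ∀ x ∈ Ω, ∀ k i j : Fin 3, nm L g x k i j = Qv x k * g x i j) :
    ∀ x ∈ Ω, ∀ i j k l : Fin 3,
      (1 / 2) * (pd (fun y => Qv y j) i x - pd (fun y => Qv y i) j x) * g x k l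
        = (1 / 2) * (lcurv L g x i j k l + lcurv L g x i j l k) :=
  semi_metric_third_bianchi_general Ω hΩ L hL g hg Qv hQv hsemi
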